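/- arXiv:2206.07286 — 4 statements merged into one kernel-verified Lean document; each statement's English description precedes it below -/
import Mathlib

section
/- De Bruijn–Erdős clique partition theorem: If the edge set of the complete graph K_t on t ≥ 2 vertices is partitioned into cliques (complete subgraphs), none of which is K_t itself, then the number of cliques in the partition is at least t. -/
/-!
The incidence vectors of the vertices in `ℝ^m` (one coordinate per clique) have Gram matrix
`J + D`: two distinct vertices share exactly one clique, and `D` is diagonal with entries
`r_v - 1`, where `r_v ≥ 2` is the number of cliques through `v` (a clique through `v` misses some
vertex `w`, and the clique covering `vw` is another one). Since `J` is positive semidefinite and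
`D` positive definite, the `t` incidence vectors are linearly independent in `ℝ^m`, so `t ≤ m`.
-/

open Finset RealInnerProductSpace

section Gram

variable {E ι : Type*} [NormedAddCommGroup E] [InnerProductSpace ℝ E] [Fintype ι]

theorem inner_sum_smul_self_of_inner_eq {x : ι → E} {c : ℝ}
    (hoff : ∀ u v, u ≠ v → ⟪x u, x v⟫ = c) (g : ι → ℝ) :
    ⟪∑ v, g v • x v, ∑ v, g v • x v⟫ = c * (∑ v, g v) ^ 2 + ∑ v, g v ^ 2 * (⟪x v, x v⟫ - c) := by
  classical
  have hgram : ∀ u v, ⟪x u, x v⟫ = c + if u = v then ⟪x v, x v⟫ - c else 0 := by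
    intro u v
    by_cases huv : u = v
    · simp [huv]
    · simp [huv, hoff u v huv]
  calc ⟪∑ v, g v • x v, ∑ v, g v • x v⟫
      = ∑ u, ∑ v, g u * g v * (c + if u = v then ⟪x v, x v⟫ - c else 0) := by
        simp only [sum_inner, inner_sum, real_inner_smul_left, real_inner_smul_right]
        refine sum_congr rfl fun u _ => sum_congr rfl fun v _ => ?_
        rw [← hgram, real_inner_comm]
        ring
    _ = c * (∑ v, g v) ^ 2 + ∑ v, g v ^ 2 * (⟪x v, x v⟫ - c) := by
        simp only [mul_add, sum_add_distrib, mul_ite, mul_zero, sum_ite_eq, mem_univ, if_true]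
        rw [sq, sum_mul_sum, mul_sum]
        congr 1
        · exact sum_congr rfl fun u _ => by rw [mul_sum]; exact sum_congr rfl fun v _ => by ring
        · exact sum_congr rfl fun v _ => by ring

theorem linearIndependent_of_inner_eq_of_lt {x : ι → E} {c : ℝ} (hc : 0 ≤ c)
    (hoff : ∀ u v, u ≠ v → ⟪x u, x v⟫ = c) (hdiag : ∀ v, c < ⟪x v, x v⟫) :
    LinearIndependent ℝ x := by
  rw [Fintype.linearIndependent_iff]
  intro g hg
  have hterm_nonneg : ∀ v ∈ univ, 0 ≤ g v ^ 2 * (⟪x v, x v⟫ - c) := fun v _ =>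
    mul_nonneg (sq_nonneg _) (sub_nonneg.mpr (hdiag v).le)
  have hsum : ∑ v, g v ^ 2 * (⟪x v, x v⟫ - c) = 0 := by
    have h := inner_sum_smul_self_of_inner_eq hoff g
    rw [hg, inner_zero_left] at h
    have := sum_nonneg hterm_nonneg
    linarith [mul_nonneg hc (sq_nonneg (∑ v, g v))]
  intro v
  have hv := (sum_eq_zero_iff_of_nonneg hterm_nonneg).mp hsum v (mem_univ v)
  rcases mul_eq_zero.mp hv with h | h
  · exact pow_eq_zero_iff two_ne_zero |>.mp h
  · linarith [hdiag v]

end Gram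

section CliquePartition

variable {α ι : Type*} [DecidableEq α] [Fintype ι] {C : ι → Finset α}

def incidence (C : ι → Finset α) (v : α) : EuclideanSpace ℝ ι :=
  WithLp.toLp 2 fun i => if v ∈ C i then 1 else 0

theorem inner_incidence (u v : α) :
    ⟪incidence C u, incidence C v⟫ = #{i | u ∈ C i ∧ v ∈ C i} := by
  simp only [incidence, PiLp.inner_apply, RCLike.inner_apply, conj_trivial, mul_ite, mul_one,
    mul_zero, ← ite_and, sum_boole]

theorem card_filter_mem_and_mem_eq_one
    (hcover : ∀ u v, u ≠ v → ∃! i, u ∈ C i ∧ v ∈ C i) {u v : α} (huv : u ≠ v) :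
    #{i | u ∈ C i ∧ v ∈ C i} = 1 := by
  obtain ⟨i, hi, huniq⟩ := hcover u v huv
  exact card_eq_one.mpr ⟨i, by ext j; simpa using ⟨huniq j, fun h => h ▸ hi⟩⟩

theorem one_lt_card_filter_mem [Nontrivial α] [Fintype α]
    (hcover : ∀ u v, u ≠ v → ∃! i, u ∈ C i ∧ v ∈ C i) (hproper : ∀ i, C i ≠ univ) (v : α) :
    1 < #{i | v ∈ C i} := by
  obtain ⟨u, hu⟩ := exists_ne v
  obtain ⟨i, ⟨-, hvi⟩, -⟩ := hcover u v hu
  obtain ⟨w, hw⟩ : ∃ w, w ∉ C i := by simpa [eq_univ_iff_forall] using hproper i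
  obtain ⟨j, ⟨hwj, hvj⟩, -⟩ := hcover w v (by rintro rfl; exact hw hvi)
  exact one_lt_card.mpr ⟨i, by simpa using hvi, j, by simpa using hvj, by rintro rfl; exact hw hwj⟩

end CliquePartition

/-- De Bruijn–Erdős clique partition theorem. -/
theorem deBruijn_Erdos_clique_partition (t m : ℕ) (ht : 2 ≤ t)
    (C : Fin m → Finset (Fin t))
    (hcover : ∀ u v : Fin t, u ≠ v → ∃! i : Fin m, u ∈ C i ∧ v ∈ C i)
    (hproper : ∀ i, C i ≠ Finset.univ) :
    t ≤ m := by
  have : Nontrivial (Fin t) := Fin.nontrivial_iff_two_le.mpr ht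
  have hli : LinearIndependent ℝ (incidence C) :=
    linearIndependent_of_inner_eq_of_lt zero_le_one
      (fun u v huv => by
        rw [inner_incidence, card_filter_mem_and_mem_eq_one hcover huv, Nat.cast_one])
      (fun v => by
        rw [inner_incidence]
        simp only [and_self]
        exact_mod_cast one_lt_card_filter_mem hcover hproper v)
  simpa using hli.fintype_card_le_finrank
end

section
/- If u and v are distinct rows of a solution (B, W) with BWBᵀ ⋆= A (wildcards only on the diagonal), all rows of B are nonzero, all diagonal entries of W are strictly positive, and u, v are not ⋆-twins (i.e., either A_{uv} = 0 or there exists an index w with A_{uw} ≠⋆ A_{vw}), then B_u ≠ B_v. -/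
/-- `a ⋆= b`: equal, or one of them is the wildcard `⋆` (modeled by `none`). -/
def starEq (a b : Option ℝ) : Prop := a = b ∨ a = none ∨ b = none

/-- Vertices that are not ⋆-twins must have distinct signatures. -/
theorem distinct_signatures_of_not_starTwins (n k : ℕ)
    (A : Fin n → Fin n → Option ℝ)
    (hsym : ∀ i j, A i j = A j i)
    (hnonneg : ∀ i j x, A i j = some x → 0 ≤ x)
    (hdiag : ∀ i j, i ≠ j → A i j ≠ none)
    (B : Fin n → Fin k → ℕ) (hB : ∀ i q, B i q = 0 ∨ B i q = 1)
    (hrows : ∀ i, ∃ q, B i q = 1)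
    (γ : Fin k → ℝ) (hγ : ∀ q, 0 < γ q)
    (hsol : ∀ i j, starEq (some (∑ q, (B i q : ℝ) * γ q * (B j q : ℝ))) (A i j))
    (u v : Fin n) (huv : u ≠ v)
    (hnotTwin : A u v = some 0 ∨ ∃ w : Fin n, ¬ starEq (A u w) (A v w)) :
    B u ≠ B v := by
  intro heq
  rcases hnotTwin with h0 | ⟨w, hw⟩
  · -- sum over uv is 0, but positive
    have hs := hsol u v
    rw [h0] at hs
    have hsum : (∑ q, (B u q : ℝ) * γ q * (B v q : ℝ)) = 0 := by
      rcases hs with h | h | h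
      · exact Option.some.inj h
      · simp at h
      · simp at h
    obtain ⟨q, hq⟩ := hrows u
    have hpos : 0 < ∑ q, (B u q : ℝ) * γ q * (B v q : ℝ) := by
      have : ∀ p ∈ Finset.univ, 0 ≤ (B u p : ℝ) * γ p * (B v p : ℝ) := by
        intro p _
        exact mul_nonneg (mul_nonneg (Nat.cast_nonneg _) (hγ p).le) (Nat.cast_nonneg _)
      refine Finset.sum_pos' this ⟨q, Finset.mem_univ q, ?_⟩
      rw [← heq, hq]
      simpa using hγ q
    linarith
  · apply hw
    have hu := hsol u w
    have hv := hsol v w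
    rw [heq] at hu
    rcases hu with h1 | h1 | h1
    · rcases hv with h2 | h2 | h2
      · rw [← h1, ← h2]; left; rfl
      · simp at h2
      · right; right; exact h2
    · simp at h1
    · right; left; exact h1
end

section
/- Strict subset signatures are impossible for ⋆-twins sharing a common neighbor: Let (B, W) be a solution with BWBᵀ ⋆= A, W diagonal with strictly positive entries. If u and v are ⋆-twins (adjacent with A_u ⋆= A_v), the support of B_u is a proper subset of the support of B_v, and there exists a clique index q with B_{vq}=1, B_{uq}=0 containing some vertex v' ∉ {u,v} (B_{v'q}=1), then we reach a contradiction: A_{uv'} < A_{vv'} yet A_{uv'} = A_{vv'}. -/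
/-- Strict subset signatures are impossible for ⋆-twins sharing a common
neighbor in a clique avoiding one of them. -/
theorem no_strict_subset_signature_for_starTwins (n k : ℕ)
    (A : Fin n → Fin n → Option ℝ)
    (hsym : ∀ i j, A i j = A j i)
    (hnonneg : ∀ i j x, A i j = some x → 0 ≤ x)
    (hdiag : ∀ i j, i ≠ j → A i j ≠ none)
    (B : Fin n → Fin k → ℕ) (hB : ∀ i q, B i q = 0 ∨ B i q = 1)
    (γ : Fin k → ℝ) (hγ : ∀ q, 0 < γ q)
    (hsol : ∀ i j, starEq (some (∑ q, (B i q : ℝ) * γ q * (B j q : ℝ))) (A i j))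
    (u v : Fin n) (huv : u ≠ v)
    (hadj : A u v ≠ some 0)
    (htwin : ∀ w : Fin n, starEq (A u w) (A v w))
    (hsub : ∀ q, B u q = 1 → B v q = 1)
    (q : Fin k) (hqv : B v q = 1) (hqu : B u q = 0)
    (v' : Fin n) (hv'u : v' ≠ u) (hv'v : v' ≠ v) (hv'q : B v' q = 1) :
    False := by
  have hAu : A u v' ≠ none := hdiag u v' (Ne.symm hv'u)
  have hAv : A v v' ≠ none := hdiag v v' (Ne.symm hv'v)
  have h1 : A u v' = some (∑ p, (B u p : ℝ) * γ p * (B v' p : ℝ)) := by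
    rcases hsol u v' with h | h | h
    · exact h.symm
    · exact absurd h (Option.some_ne_none _)
    · exact absurd h hAu
  have h2 : A v v' = some (∑ p, (B v p : ℝ) * γ p * (B v' p : ℝ)) := by
    rcases hsol v v' with h | h | h
    · exact h.symm
    · exact absurd h (Option.some_ne_none _)
    · exact absurd h hAv
  have heq : (∑ p, (B u p : ℝ) * γ p * (B v' p : ℝ))
      = ∑ p, (B v p : ℝ) * γ p * (B v' p : ℝ) := by
    rcases htwin v' with h | h | h
    · rw [h1, h2] at h; exact Option.some.inj h
    · exact absurd h hAu
    · exact absurd h hAv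
  have hlt : (∑ p, (B u p : ℝ) * γ p * (B v' p : ℝ))
      < ∑ p, (B v p : ℝ) * γ p * (B v' p : ℝ) := by
    refine Finset.sum_lt_sum ?_ ⟨q, Finset.mem_univ q, ?_⟩
    · intro p _
      rcases hB u p with h0 | h1
      · rw [h0]
        simp only [Nat.cast_zero, zero_mul]
        have := (hγ p).le
        positivity
      · rw [h1, hsub p h1]
    · rw [hqu, hqv, hv'q]
      simp [hγ q]
  exact absurd heq (ne_of_lt hlt)
end

section
/- Kernel soundness (lifting): Let D be a block reduced to representative i with diagonal annotation A'_{ii} = A_{ij} for some j ∈ D, j ≠ i. If (B', W) solves the reduced instance A' (on V \ (D \ {i})), then extending B by setting B_u := B'_i for all u ∈ D and B_u := B'_u otherwise gives a solution of the original instance: BWBᵀ ⋆= A. -/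
/-- Kernel soundness: a solution of the reduced instance (block `D` replaced by
its representative `i`, annotated with the common block value `A i j`) lifts to
a solution of the original instance. -/
theorem kernel_soundness (n k : ℕ)
    (A : Fin n → Fin n → Option ℝ)
    (hsym : ∀ i j, A i j = A j i)
    (hnonneg : ∀ i j x, A i j = some x → 0 ≤ x)
    (hdiag : ∀ i j, i ≠ j → A i j ≠ none)
    (D : Finset (Fin n)) (i j : Fin n) (hi : i ∈ D) (hj : j ∈ D) (hij : j ≠ i)
    (htwins : ∀ u ∈ D, ∀ v ∈ D, u ≠ v → ∀ w : Fin n, starEq (A u w) (A v w))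
    (hadj : ∀ u ∈ D, ∀ v ∈ D, u ≠ v → A u v = A i j)
    (B' : Fin n → Fin k → ℕ) (hB' : ∀ u q, B' u q = 0 ∨ B' u q = 1)
    (γ : Fin k → ℝ) (hγ : ∀ q, 0 ≤ γ q)
    (hsol' : ∀ u : Fin n, (u ∉ D ∨ u = i) → ∀ v : Fin n, (v ∉ D ∨ v = i) →
      starEq (some (∑ q, (B' u q : ℝ) * γ q * (B' v q : ℝ)))
        (if u = i ∧ v = i then A i j else A u v)) :
    ∀ u v : Fin n,
      starEq (some (∑ q, ((if u ∈ D then B' i else B' u) q : ℝ) * γ q *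
        ((if v ∈ D then B' i else B' v) q : ℝ))) (A u v) := by
  have chain : ∀ (s : ℝ) (x y : Option ℝ), x ≠ none → starEq (some s) x → starEq x y →
      starEq (some s) y := by
    rintro s x y hx (h1 | h1 | h1) (h2 | h2 | h2)
    exacts [Or.inl (h1.trans h2), absurd h2 hx, Or.inr (Or.inr h2),
      absurd h1 (by simp), absurd h1 (by simp), absurd h1 (by simp),
      absurd h1 hx, absurd h1 hx, absurd h1 hx]
  have hAij : A i j ≠ none := hdiag i j (fun h => hij h.symm)
  intro u v
  by_cases hu : u ∈ D <;> by_cases hv : v ∈ D <;>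
    simp only [if_pos, if_neg, hu, hv, if_true, if_false]
  · -- u ∈ D, v ∈ D
    have h0 : starEq (some (∑ q, (B' i q : ℝ) * γ q * (B' i q : ℝ))) (A i j) := by
      simpa using hsol' i (Or.inr rfl) i (Or.inr rfl)
    by_cases huv : u = v
    · subst huv
      by_cases hui : u = i
      · subst hui
        exact chain _ _ _ hAij h0 (hsym j u ▸ htwins j hj u hi hij u)
      · have hiu : i ≠ u := fun h => hui h.symm
        have h2 : starEq (A i j) (A u u) :=
          (hadj i hi u hu hiu) ▸ htwins i hi u hu hiu u
        exact chain _ _ _ hAij h0 h2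
    · rw [hadj u hu v hv huv]; exact h0
  · -- u ∈ D, v ∉ D
    have hvi : v ≠ i := fun h => hv (h ▸ hi)
    have h0 : starEq (some (∑ q, (B' i q : ℝ) * γ q * (B' v q : ℝ))) (A i v) := by
      simpa [hvi] using hsol' i (Or.inr rfl) v (Or.inl hv)
    by_cases hui : u = i
    · subst hui; exact h0
    · have hAiv : A i v ≠ none := hdiag i v (fun h => hvi h.symm)
      exact chain _ _ _ hAiv h0 (htwins i hi u hu (fun h => hui h.symm) v)
  · -- u ∉ D, v ∈ D
    have hui : u ≠ i := fun h => hu (h ▸ hi)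
    have h0 : starEq (some (∑ q, (B' u q : ℝ) * γ q * (B' i q : ℝ))) (A u i) := by
      simpa [hui] using hsol' u (Or.inl hu) i (Or.inr rfl)
    by_cases hvi : v = i
    · subst hvi; exact h0
    · have hAui : A u i ≠ none := hdiag u i hui
      have h2 := htwins i hi v hv (fun h => hvi h.symm) u
      rw [hsym i u, hsym v u] at h2
      exact chain _ _ _ hAui h0 h2
  · -- u ∉ D, v ∉ D
    have hui : u ≠ i := fun h => hu (h ▸ hi)
    simpa [hui] using hsol' u (Or.inl hu) v (Or.inl hv)
end
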